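/- arXiv:0807.5059 — 4 statements merged into one kernel-verified Lean document; each statement's English description precedes it below -/
import Mathlib

section
/- Let (X, 𝒜, μ) be a measure space, j ∈ ℕ, d ≥ 1, A > 0, Z a finite index set, and for each ξ ∈ Z let φ_ξ : X → ℝ be measurable. Assume that Σ_{ξ∈Z} |φ_ξ(x)| ≤ A·2^{jd/2} for every x ∈ X, and that ∫ |φ_ξ| dμ ≤ A·2^{−jd/2} for every ξ ∈ Z. Then for every real 1 ≤ p < ∞ and every family of reals (λ_ξ)_{ξ∈Z}, ‖Σ_{ξ∈Z} λ_ξ φ_ξ‖_{L^p(μ)} ≤ A·2^{jd(1/2 − 1/p)}·(Σ_{ξ∈Z} |λ_ξ|^p)^{1/p}. -/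
open MeasureTheory

/-- Synthesis inequality for needlet-type families: if `Σ_ξ |φ_ξ(x)| ≤ A·2^{jd/2}`
pointwise and `‖φ_ξ‖₁ ≤ A·2^{−jd/2}`, then for `1 ≤ p < ∞`,
`‖Σ_ξ λ_ξ φ_ξ‖_p ≤ A·2^{jd(1/2−1/p)}·(Σ_ξ |λ_ξ|^p)^{1/p}`. -/
theorem stmt_3 {X : Type*} [MeasurableSpace X] (μ : Measure X)
    {ι : Type*} (Z : Finset ι) (j d : ℕ) (hd : 1 ≤ d) (A : ℝ) (hA : 0 < A)
    (φ : ι → X → ℝ) (hmeas : ∀ ξ ∈ Z, Measurable (φ ξ))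
    (h_ptwise : ∀ x, ∑ ξ ∈ Z, |φ ξ x| ≤ A * 2 ^ ((j * d : ℝ) / 2))
    (h_L1 : ∀ ξ ∈ Z, ∫⁻ x, ENNReal.ofReal |φ ξ x| ∂μ ≤
      ENNReal.ofReal (A * 2 ^ (-(j * d : ℝ) / 2)))
    (p : ℝ) (hp : 1 ≤ p) (lam : ι → ℝ) :
    eLpNorm (fun x => ∑ ξ ∈ Z, lam ξ * φ ξ x) (ENNReal.ofReal p) μ ≤
      ENNReal.ofReal
        (A * 2 ^ ((j * d : ℝ) * (1 / 2 - 1 / p)) * (∑ ξ ∈ Z, |lam ξ| ^ p) ^ (1 / p)) := by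
  have hp0 : 0 < p := lt_of_lt_of_le one_pos hp
  set B : ℝ := A * 2 ^ ((j * d : ℝ) / 2) with hB
  have hB0 : 0 < B := by positivity
  set S : ℝ := ∑ ξ ∈ Z, |lam ξ| ^ p with hS
  have hS0 : 0 ≤ S := Finset.sum_nonneg fun ξ _ => by positivity
  have hq0 : ENNReal.ofReal p ≠ 0 := by simp [ENNReal.ofReal_eq_zero, not_le, hp0]
  have hqt : ENNReal.ofReal p ≠ ⊤ := ENNReal.ofReal_ne_top
  rw [eLpNorm_eq_lintegral_rpow_enorm_toReal hq0 hqt, ENNReal.toReal_ofReal hp0.le]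
  -- pointwise bound
  have key : ∀ x, (‖∑ ξ ∈ Z, lam ξ * φ ξ x‖₊ : ENNReal) ^ p ≤
      ENNReal.ofReal (B ^ (p - 1) * ∑ ξ ∈ Z, |φ ξ x| * |lam ξ| ^ p) := by
    intro x
    rw [← enorm_eq_nnnorm, ← ofReal_norm, Real.norm_eq_abs,
      ENNReal.ofReal_rpow_of_nonneg (abs_nonneg _) hp0.le]
    apply ENNReal.ofReal_le_ofReal
    have h1 : |∑ ξ ∈ Z, lam ξ * φ ξ x| ≤ ∑ ξ ∈ Z, |φ ξ x| * |lam ξ| := by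
      refine (Finset.abs_sum_le_sum_abs _ _).trans ?_
      apply le_of_eq; refine Finset.sum_congr rfl fun ξ _ => ?_
      rw [abs_mul, mul_comm]
    have h2 : ∑ ξ ∈ Z, |φ ξ x| * |lam ξ| ≤
        (∑ ξ ∈ Z, |φ ξ x|) ^ (1 - p⁻¹) * (∑ ξ ∈ Z, |φ ξ x| * |lam ξ| ^ p) ^ p⁻¹ :=
      Real.inner_le_weight_mul_Lp_of_nonneg Z hp _ _ (fun ξ => abs_nonneg _)
        (fun ξ => abs_nonneg _)
    have habs : 0 ≤ ∑ ξ ∈ Z, |φ ξ x| * |lam ξ| := Finset.sum_nonneg fun ξ _ => by positivity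
    have hw : 0 ≤ ∑ ξ ∈ Z, |φ ξ x| := Finset.sum_nonneg fun ξ _ => abs_nonneg _
    have hwS : 0 ≤ ∑ ξ ∈ Z, |φ ξ x| * |lam ξ| ^ p := Finset.sum_nonneg fun ξ _ => by positivity
    calc |∑ ξ ∈ Z, lam ξ * φ ξ x| ^ p
        ≤ ((∑ ξ ∈ Z, |φ ξ x|) ^ (1 - p⁻¹) * (∑ ξ ∈ Z, |φ ξ x| * |lam ξ| ^ p) ^ p⁻¹) ^ p := by
          apply Real.rpow_le_rpow (abs_nonneg _) (h1.trans h2) hp0.le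
      _ = (∑ ξ ∈ Z, |φ ξ x|) ^ (p - 1) * (∑ ξ ∈ Z, |φ ξ x| * |lam ξ| ^ p) := by
          rw [Real.mul_rpow (by positivity) (by positivity),
            ← Real.rpow_mul hw, ← Real.rpow_mul hwS]
          rw [show (1 - p⁻¹) * p = p - 1 by field_simp,
            show p⁻¹ * p = 1 by field_simp, Real.rpow_one]
      _ ≤ B ^ (p - 1) * ∑ ξ ∈ Z, |φ ξ x| * |lam ξ| ^ p := by
          apply mul_le_mul_of_nonneg_right _ hwS
          exact Real.rpow_le_rpow hw (h_ptwise x) (by linarith)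
  -- integral computation
  have habsne : ∀ ξ, (0:ℝ) ≤ |lam ξ| ^ p := fun ξ => by positivity
  have step1 : ∫⁻ x, ENNReal.ofReal (B ^ (p - 1) * ∑ ξ ∈ Z, |φ ξ x| * |lam ξ| ^ p) ∂μ
      ≤ ENNReal.ofReal (B ^ (p - 1) * (A * 2 ^ (-(j * d : ℝ) / 2)) * S) := by
    have hmeas' : ∀ ξ ∈ Z, Measurable fun x => ENNReal.ofReal (|φ ξ x| * |lam ξ| ^ p) :=
      fun ξ hξ => ((hmeas ξ hξ).abs.mul_const _).ennreal_ofReal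
    calc ∫⁻ x, ENNReal.ofReal (B ^ (p - 1) * ∑ ξ ∈ Z, |φ ξ x| * |lam ξ| ^ p) ∂μ
        = ENNReal.ofReal (B ^ (p - 1)) *
            ∑ ξ ∈ Z, (∫⁻ x, ENNReal.ofReal |φ ξ x| ∂μ) * ENNReal.ofReal (|lam ξ| ^ p) := by
          simp_rw [ENNReal.ofReal_mul (by positivity : (0:ℝ) ≤ B ^ (p - 1))]
          rw [lintegral_const_mul' _ _ ENNReal.ofReal_ne_top]
          congr 1
          have : ∀ x, ENNReal.ofReal (∑ ξ ∈ Z, |φ ξ x| * |lam ξ| ^ p)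
              = ∑ ξ ∈ Z, ENNReal.ofReal (|φ ξ x| * |lam ξ| ^ p) := fun x =>
            ENNReal.ofReal_sum_of_nonneg (fun ξ _ => by positivity)
          simp_rw [this]
          rw [lintegral_finset_sum Z hmeas']
          refine Finset.sum_congr rfl fun ξ hξ => ?_
          simp_rw [ENNReal.ofReal_mul (abs_nonneg _)]
          rw [lintegral_mul_const' _ _ ENNReal.ofReal_ne_top]
      _ ≤ ENNReal.ofReal (B ^ (p - 1)) *
            ∑ ξ ∈ Z, ENNReal.ofReal (A * 2 ^ (-(j * d : ℝ) / 2)) * ENNReal.ofReal (|lam ξ| ^ p) := by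
          gcongr with ξ hξ
          exact h_L1 ξ hξ
      _ = ENNReal.ofReal (B ^ (p - 1) * (A * 2 ^ (-(j * d : ℝ) / 2)) * S) := by
          simp_rw [← ENNReal.ofReal_mul (by positivity : (0:ℝ) ≤ A * 2 ^ (-(j * d : ℝ) / 2)),
            ← ENNReal.ofReal_sum_of_nonneg (fun ξ (_ : ξ ∈ Z) => by positivity :
              ∀ ξ ∈ Z, (0:ℝ) ≤ A * 2 ^ (-(j * d : ℝ) / 2) * |lam ξ| ^ p),
            ← ENNReal.ofReal_mul (by positivity : (0:ℝ) ≤ B ^ (p - 1)), ← Finset.mul_sum]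
          rw [hS]
          ring_nf
  -- real algebra
  have hreal : (B ^ (p - 1) * (A * 2 ^ (-(j * d : ℝ) / 2)) * S) ^ (1 / p)
      = A * 2 ^ ((j * d : ℝ) * (1 / 2 - 1 / p)) * S ^ (1 / p) := by
    set a : ℝ := (j * d : ℝ)
    have h2 : (0:ℝ) < 2 := by norm_num
    have hBA : B ^ (p - 1) * (A * 2 ^ (-a / 2)) = A ^ p * 2 ^ (a / 2 * (p - 1) + -a / 2) := by
      rw [hB, Real.mul_rpow hA.le (by positivity), ← Real.rpow_mul h2.le,
        show A ^ p = A ^ (p - 1) * A ^ (1:ℝ) by rw [← Real.rpow_add hA]; ring_nf,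
        Real.rpow_one, Real.rpow_add h2]
      ring
    rw [hBA, Real.mul_rpow (by positivity) hS0, Real.mul_rpow (by positivity) (by positivity),
      ← Real.rpow_mul hA.le, ← Real.rpow_mul h2.le,
      show p * (1 / p) = 1 by field_simp, Real.rpow_one,
      show (a / 2 * (p - 1) + -a / 2) * (1 / p) = a * (1 / 2 - 1 / p) by field_simp; ring]
  calc (∫⁻ x, (‖∑ ξ ∈ Z, lam ξ * φ ξ x‖₊ : ENNReal) ^ p ∂μ) ^ (1 / p)
      ≤ (ENNReal.ofReal (B ^ (p - 1) * (A * 2 ^ (-(j * d : ℝ) / 2)) * S)) ^ (1 / p) :=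
        ENNReal.rpow_le_rpow ((lintegral_mono key).trans step1) (by positivity)
    _ = ENNReal.ofReal (A * 2 ^ ((j * d : ℝ) * (1 / 2 - 1 / p)) * S ^ (1 / p)) := by
        rw [ENNReal.ofReal_rpow_of_nonneg (by positivity) (by positivity), hreal]
end

section
/- Let (X, 𝒜, μ) be a measure space, j ∈ ℕ, d ≥ 1, A > 0, Z a finite index set, and for each ξ ∈ Z let φ_ξ : X → ℝ be measurable. Assume that Σ_{ξ∈Z} |φ_ξ(x)| ≤ A·2^{jd/2} for every x ∈ X, and that ∫ |φ_ξ| dμ ≤ A·2^{−jd/2} for every ξ ∈ Z. Then for every real 1 ≤ p < ∞ and every f ∈ L^p(μ), (Σ_{ξ∈Z} |∫ f φ_ξ dμ|^p)^{1/p} ≤ A·2^{−jd(1/2 − 1/p)}·‖f‖_{L^p(μ)}. -/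
open MeasureTheory
open scoped ENNReal NNReal

/-- Analysis (coefficient) inequality for needlet-type families: if
`Σ_ξ |φ_ξ(x)| ≤ A·2^{jd/2}` pointwise and `‖φ_ξ‖₁ ≤ A·2^{−jd/2}`, then for `1 ≤ p < ∞`
and `f ∈ L^p(μ)`, `(Σ_ξ |⟨f, φ_ξ⟩|^p)^{1/p} ≤ A·2^{−jd(1/2−1/p)}·‖f‖_p`. -/
theorem stmt_4 {X : Type*} [MeasurableSpace X] (μ : Measure X)
    {ι : Type*} (Z : Finset ι) (j d : ℕ) (hd : 1 ≤ d) (A : ℝ) (hA : 0 < A)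
    (φ : ι → X → ℝ) (hmeas : ∀ ξ ∈ Z, Measurable (φ ξ))
    (h_ptwise : ∀ x, ∑ ξ ∈ Z, |φ ξ x| ≤ A * 2 ^ ((j * d : ℝ) / 2))
    (h_L1 : ∀ ξ ∈ Z, ∫⁻ x, ENNReal.ofReal |φ ξ x| ∂μ ≤
      ENNReal.ofReal (A * 2 ^ (-(j * d : ℝ) / 2)))
    (p : ℝ) (hp : 1 ≤ p) (f : X → ℝ) (hf : MemLp f (ENNReal.ofReal p) μ) :
    ENNReal.ofReal ((∑ ξ ∈ Z, |∫ x, f x * φ ξ x ∂μ| ^ p) ^ (1 / p)) ≤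
      ENNReal.ofReal (A * 2 ^ (-(j * d : ℝ) * (1 / 2 - 1 / p))) *
        eLpNorm f (ENNReal.ofReal p) μ := by
  have hp0 : 0 < p := lt_of_lt_of_le zero_lt_one hp
  have hfm : AEMeasurable f μ := hf.aestronglyMeasurable.aemeasurable
  set c₀ : ℝ≥0∞ := ENNReal.ofReal (A * 2 ^ (-(j * d : ℝ) / 2)) with hc₀
  set c₁ : ℝ≥0∞ := ENNReal.ofReal (A * 2 ^ ((j * d : ℝ) / 2)) with hc₁
  set F : X → ℝ≥0∞ := fun x => ENNReal.ofReal |f x| with hF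
  have hFa : AEMeasurable F μ := by
    simp only [hF, ← Real.enorm_eq_ofReal_abs]
    exact hfm.enorm
  -- Step 1: |coefficient| bounded by lintegral of |f|·|φ|
  have step1 : ∀ ξ ∈ Z, ENNReal.ofReal |∫ x, f x * φ ξ x ∂μ| ≤
      ∫⁻ x, F x * ENNReal.ofReal |φ ξ x| ∂μ := by
    intro ξ _
    calc ENNReal.ofReal |∫ x, f x * φ ξ x ∂μ|
        = (‖∫ x, f x * φ ξ x ∂μ‖ₑ : ℝ≥0∞) := (Real.enorm_eq_ofReal_abs _).symm
      _ ≤ ∫⁻ x, (‖f x * φ ξ x‖ₑ : ℝ≥0∞) ∂μ := enorm_integral_le_lintegral_enorm _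
      _ = ∫⁻ x, F x * ENNReal.ofReal |φ ξ x| ∂μ := by
          refine lintegral_congr fun x => ?_
          rw [Real.enorm_eq_ofReal_abs, abs_mul,
            ENNReal.ofReal_mul (abs_nonneg _)]
  -- Step 2 (Hölder): per-ξ bound of |coef|^p
  have key : ∀ ξ ∈ Z, (ENNReal.ofReal |∫ x, f x * φ ξ x ∂μ|) ^ p ≤
      (∫⁻ x, F x ^ p * ENNReal.ofReal |φ ξ x| ∂μ) * c₀ ^ (p - 1) := by
    intro ξ hξ
    rcases eq_or_lt_of_le hp with hp1 | hp1
    · simp only [← hp1, ENNReal.rpow_one, sub_self, ENNReal.rpow_zero, mul_one]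
      exact step1 ξ hξ
    · -- Hölder with conjugate exponent q = p/(p-1)
      set q : ℝ := p / (p - 1) with hq
      have hpq : p.HolderConjugate q := Real.HolderConjugate.conjExponent hp1
      have hq0 : q ≠ 0 := hpq.symm.ne_zero
      have hφm : AEMeasurable (fun x => ENNReal.ofReal |φ ξ x|) μ :=
        ((hmeas ξ hξ).abs.ennreal_ofReal).aemeasurable
      have hG : AEMeasurable (fun x => (ENNReal.ofReal |φ ξ x|) ^ (1 / q)) μ :=
        hφm.pow_const _
      have hFm : AEMeasurable (fun x => F x * (ENNReal.ofReal |φ ξ x|) ^ (1 / p)) μ :=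
        hFa.mul (hφm.pow_const _)
      have holder := ENNReal.lintegral_mul_le_Lp_mul_Lq μ hpq hFm hG
      have hsplit : ∀ x : X, F x * ENNReal.ofReal |φ ξ x| =
          (F x * (ENNReal.ofReal |φ ξ x|) ^ (1 / p)) *
            (ENNReal.ofReal |φ ξ x|) ^ (1 / q) := by
        intro x
        rw [mul_assoc, ← ENNReal.rpow_add_of_nonneg _ _ hpq.one_div_nonneg hpq.symm.one_div_nonneg]
        have : 1 / p + 1 / q = 1 := by
          rw [one_div, one_div]; exact hpq.inv_add_inv_eq_one
        rw [this, ENNReal.rpow_one]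
      have hFp : ∀ x : X, (F x * (ENNReal.ofReal |φ ξ x|) ^ (1 / p)) ^ p =
          F x ^ p * ENNReal.ofReal |φ ξ x| := by
        intro x
        rw [ENNReal.mul_rpow_of_nonneg _ _ hp0.le, ← ENNReal.rpow_mul, one_div,
          inv_mul_cancel₀ hp0.ne', ENNReal.rpow_one]
      have hGq : ∀ x : X, ((ENNReal.ofReal |φ ξ x|) ^ (1 / q)) ^ q =
          ENNReal.ofReal |φ ξ x| := by
        intro x
        rw [← ENNReal.rpow_mul, one_div, inv_mul_cancel₀ hq0, ENNReal.rpow_one]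
      have h2 : ENNReal.ofReal |∫ x, f x * φ ξ x ∂μ| ≤
          (∫⁻ x, F x ^ p * ENNReal.ofReal |φ ξ x| ∂μ) ^ (1 / p) * c₀ ^ (1 / q) := by
        refine le_trans (step1 ξ hξ) ?_
        calc ∫⁻ x, F x * ENNReal.ofReal |φ ξ x| ∂μ
            = ∫⁻ x, ((fun y => F y * (ENNReal.ofReal |φ ξ y|) ^ (1 / p)) *
                (fun y => (ENNReal.ofReal |φ ξ y|) ^ (1 / q))) x ∂μ := by
              refine lintegral_congr fun x => ?_
              simp only [Pi.mul_apply]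
              exact hsplit x
          _ ≤ (∫⁻ x, (F x * (ENNReal.ofReal |φ ξ x|) ^ (1 / p)) ^ p ∂μ) ^ (1 / p) *
                (∫⁻ x, ((ENNReal.ofReal |φ ξ x|) ^ (1 / q)) ^ q ∂μ) ^ (1 / q) := holder
          _ = (∫⁻ x, F x ^ p * ENNReal.ofReal |φ ξ x| ∂μ) ^ (1 / p) *
                (∫⁻ x, ENNReal.ofReal |φ ξ x| ∂μ) ^ (1 / q) := by
              rw [lintegral_congr fun x => hFp x, lintegral_congr fun x => hGq x]
          _ ≤ (∫⁻ x, F x ^ p * ENNReal.ofReal |φ ξ x| ∂μ) ^ (1 / p) * c₀ ^ (1 / q) := by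
              gcongr
              exact h_L1 ξ hξ
      calc (ENNReal.ofReal |∫ x, f x * φ ξ x ∂μ|) ^ p
          ≤ ((∫⁻ x, F x ^ p * ENNReal.ofReal |φ ξ x| ∂μ) ^ (1 / p) * c₀ ^ (1 / q)) ^ p :=
            ENNReal.rpow_le_rpow h2 hp0.le
        _ = (∫⁻ x, F x ^ p * ENNReal.ofReal |φ ξ x| ∂μ) * c₀ ^ (p - 1) := by
            rw [ENNReal.mul_rpow_of_nonneg _ _ hp0.le, ← ENNReal.rpow_mul,
              ← ENNReal.rpow_mul, one_div, inv_mul_cancel₀ hp0.ne', ENNReal.rpow_one]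
            congr 1
            congr 1
            rw [one_div, hq]
            field_simp
        _ ≤ _ := le_rfl
  -- Step 3: sum over ξ
  have step3 : ∑ ξ ∈ Z, ∫⁻ x, F x ^ p * ENNReal.ofReal |φ ξ x| ∂μ ≤
      c₁ * ∫⁻ x, F x ^ p ∂μ := by
    have hmeas' : ∀ ξ ∈ Z, Measurable fun x => ENNReal.ofReal |φ ξ x| :=
      fun ξ hξ => (hmeas ξ hξ).abs.ennreal_ofReal
    calc ∑ ξ ∈ Z, ∫⁻ x, F x ^ p * ENNReal.ofReal |φ ξ x| ∂μ
        = ∫⁻ x, ∑ ξ ∈ Z, F x ^ p * ENNReal.ofReal |φ ξ x| ∂μ := by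
          rw [lintegral_finset_sum']
          intro ξ hξ
          exact (hFa.pow_const p).mul (hmeas' ξ hξ).aemeasurable
      _ = ∫⁻ x, F x ^ p * ∑ ξ ∈ Z, ENNReal.ofReal |φ ξ x| ∂μ := by
          refine lintegral_congr fun x => (Finset.mul_sum _ _ _).symm
      _ ≤ ∫⁻ x, F x ^ p * c₁ ∂μ := by
          refine lintegral_mono fun x => ?_
          gcongr
          rw [← ENNReal.ofReal_sum_of_nonneg (fun ξ _ => abs_nonneg _)]
          exact ENNReal.ofReal_le_ofReal (h_ptwise x)
      _ = c₁ * ∫⁻ x, F x ^ p ∂μ := by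
          rw [lintegral_mul_const'' _ (hFa.pow_const p), mul_comm]
  -- identify eLpNorm
  have hpne : ENNReal.ofReal p ≠ 0 := by
    simp [ENNReal.ofReal_eq_zero, not_le, hp0]
  have heLp : eLpNorm f (ENNReal.ofReal p) μ = (∫⁻ x, F x ^ p ∂μ) ^ (1 / p) := by
    rw [eLpNorm_eq_lintegral_rpow_enorm_toReal hpne ENNReal.ofReal_ne_top,
      ENNReal.toReal_ofReal hp0.le]
    congr 1
    refine lintegral_congr fun x => ?_
    simp only [hF, ← Real.enorm_eq_ofReal_abs]
  -- Put everything together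
  have hsum : ENNReal.ofReal ((∑ ξ ∈ Z, |∫ x, f x * φ ξ x ∂μ| ^ p) ^ (1 / p)) =
      (∑ ξ ∈ Z, (ENNReal.ofReal |∫ x, f x * φ ξ x ∂μ|) ^ p) ^ (1 / p) := by
    rw [← ENNReal.ofReal_rpow_of_nonneg (Finset.sum_nonneg fun ξ _ => by positivity)
      (by positivity : (0:ℝ) ≤ 1 / p), ENNReal.ofReal_sum_of_nonneg (fun ξ _ => by positivity)]
    congr 1
    refine Finset.sum_congr rfl fun ξ _ => ?_
    rw [ENNReal.ofReal_rpow_of_nonneg (abs_nonneg _) hp0.le]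
  rw [hsum, heLp]
  have hmain : ∑ ξ ∈ Z, (ENNReal.ofReal |∫ x, f x * φ ξ x ∂μ|) ^ p ≤
      c₀ ^ (p - 1) * c₁ * ∫⁻ x, F x ^ p ∂μ := by
    calc ∑ ξ ∈ Z, (ENNReal.ofReal |∫ x, f x * φ ξ x ∂μ|) ^ p
        ≤ ∑ ξ ∈ Z, (∫⁻ x, F x ^ p * ENNReal.ofReal |φ ξ x| ∂μ) * c₀ ^ (p - 1) :=
          Finset.sum_le_sum key
      _ = (∑ ξ ∈ Z, ∫⁻ x, F x ^ p * ENNReal.ofReal |φ ξ x| ∂μ) * c₀ ^ (p - 1) :=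
          (Finset.sum_mul _ _ _).symm
      _ ≤ (c₁ * ∫⁻ x, F x ^ p ∂μ) * c₀ ^ (p - 1) := by gcongr
      _ = c₀ ^ (p - 1) * c₁ * ∫⁻ x, F x ^ p ∂μ := by ring
  calc (∑ ξ ∈ Z, (ENNReal.ofReal |∫ x, f x * φ ξ x ∂μ|) ^ p) ^ (1 / p)
      ≤ (c₀ ^ (p - 1) * c₁ * ∫⁻ x, F x ^ p ∂μ) ^ (1 / p) :=
        ENNReal.rpow_le_rpow hmain (by positivity)
    _ = (c₀ ^ ((p - 1) / p) * c₁ ^ (1 / p)) * (∫⁻ x, F x ^ p ∂μ) ^ (1 / p) := by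
        rw [ENNReal.mul_rpow_of_nonneg _ _ (by positivity),
          ENNReal.mul_rpow_of_nonneg _ _ (by positivity), ← ENNReal.rpow_mul]
        ring_nf
    _ = ENNReal.ofReal (A * 2 ^ (-(j * d : ℝ) * (1 / 2 - 1 / p))) *
          (∫⁻ x, F x ^ p ∂μ) ^ (1 / p) := by
        congr 1
        have h2pos : (0:ℝ) < 2 ^ (-(j * d : ℝ) / 2) := by positivity
        have h2pos' : (0:ℝ) < 2 ^ ((j * d : ℝ) / 2) := by positivity
        rw [hc₀, hc₁, ENNReal.ofReal_rpow_of_pos (by positivity),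
          ENNReal.ofReal_rpow_of_pos (by positivity),
          ← ENNReal.ofReal_mul (by positivity)]
        congr 1
        rw [Real.mul_rpow hA.le h2pos.le, Real.mul_rpow hA.le h2pos'.le,
          ← Real.rpow_mul (by norm_num : (0:ℝ) ≤ 2),
          ← Real.rpow_mul (by norm_num : (0:ℝ) ≤ 2), mul_mul_mul_comm,
          ← Real.rpow_add hA, ← Real.rpow_add (by norm_num : (0:ℝ) < 2)]
        have hpe : (p - 1) / p + 1 / p = 1 := by field_simp; ring
        rw [hpe, Real.rpow_one]
        have hpne' : p ≠ 0 := hp0.ne'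
        congr 1
        congr 1
        field_simp
        ring
end

section
/- Let d ≥ 1, j ∈ ℕ, n ≥ 1 with 2^{jd} ≤ n, and let X₁, …, Xₙ be i.i.d. random variables with values in a measurable space S. Let ψ : S → ℝ be measurable with |ψ(x)| ≤ c·2^{jd/2} for all x and E[ψ(X₁)²] ≤ σ², where c, σ > 0. Set β = E[ψ(X₁)] and β̂ = n^{−1}·Σ_{i=1}^n ψ(Xᵢ). Then for every real q ≥ 1 there exists a constant s_q, depending only on q, σ and c, such that E[|β̂ − β|^q] ≤ s_q·n^{−q/2}. -/
open MeasureTheory ProbabilityTheory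

universe u v

lemma integrable_of_abs_le {Ω : Type u} [MeasurableSpace Ω] {P : Measure Ω}
    [IsFiniteMeasure P] {f : Ω → ℝ} (hf : Measurable f) (C : ℝ) (h : ∀ ω, |f ω| ≤ C) :
    Integrable f P :=
  (integrable_const C).mono' hf.aestronglyMeasurable
    (Filter.Eventually.of_forall (by simpa [Real.norm_eq_abs] using h))

lemma integral_prod_of_indep {Ω : Type u} [MeasurableSpace Ω] {P : Measure Ω}
    [IsProbabilityMeasure P] {ι : Type*} {Y : ι → Ω → ℝ} (hmeas : ∀ i, Measurable (Y i))
    (hindep : iIndepFun Y P) (T : Finset ι) :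
    ∫ ω, ∏ i ∈ T, Y i ω ∂P = ∏ i ∈ T, ∫ ω, Y i ω ∂P := by
  classical
  induction T using Finset.cons_induction with
  | empty => simp
  | cons a s ha ih =>
    have hI : IndepFun (Y a) (∏ i ∈ s, Y i) P :=
      (hindep.indepFun_finsetProd_of_notMem hmeas ha).symm
    have hfn : (∏ i ∈ s, Y i) = fun ω => ∏ i ∈ s, Y i ω := by
      funext ω; exact Finset.prod_apply ω s Y
    have hmp : Measurable (∏ i ∈ s, Y i) := by
      rw [hfn]; exact Finset.measurable_prod s fun i _ => hmeas i
    have := hI.integral_mul_eq_mul_integral (hmeas a).aestronglyMeasurable hmp.aestronglyMeasurable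
    rw [Finset.prod_cons, ← ih]
    calc ∫ ω, ∏ i ∈ Finset.cons a s ha, Y i ω ∂P
        = ∫ ω, (Y a * ∏ i ∈ s, Y i) ω ∂P := by
          simp only [Finset.prod_cons, Pi.mul_apply, Finset.prod_apply]
      _ = (∫ ω, Y a ω ∂P) * ∫ ω, (∏ i ∈ s, Y i) ω ∂P := this
      _ = (∫ ω, Y a ω ∂P) * ∫ ω, ∏ i ∈ s, Y i ω ∂P := by
          simp [Finset.prod_apply]

lemma even_moment_bound {Ω : Type u} [MeasurableSpace Ω] {P : Measure Ω}
    [IsProbabilityMeasure P] {n : ℕ} {Y : Fin n → Ω → ℝ} (k : ℕ) (hk : 1 ≤ k)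
    (E V M : ℝ) (hE : 0 ≤ E) (hVnn : 0 ≤ V) (hM1 : 1 ≤ M)
    (hmeas : ∀ i, Measurable (Y i))
    (hindep : iIndepFun Y P)
    (hbound : ∀ i ω, |Y i ω| ≤ E)
    (hmom1 : ∀ i, ∫ ω, Y i ω ∂P = 0)
    (hmom : ∀ (i : Fin n) (r : ℕ), 2 ≤ r → |∫ ω, (Y i ω)^r ∂P| ≤ E^(r-2) * V)
    (hE2 : E^2 ≤ M * n) (hV : V ≤ M) :
    |∫ ω, (∑ i, Y i ω)^(2*k) ∂P| ≤ ((k:ℝ)+1) * (k:ℝ)^(2*k) * M^k * (n:ℝ)^k := by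
  classical
  set N := 2*k with hN
  set im : (Fin N → Fin n) → Finset (Fin n) := fun p => Finset.image p Finset.univ with him
  set cnt : (Fin N → Fin n) → Fin n → ℕ :=
    fun p i => (Finset.univ.filter fun t => p t = i).card with hcnt
  set Term : (Fin N → Fin n) → ℝ :=
    fun p => ∏ i ∈ im p, ∫ ω, (Y i ω)^(cnt p i) ∂P with hTerm
  have hMnn : (0:ℝ) ≤ M := le_trans zero_le_one hM1
  have hnnn : (0:ℝ) ≤ (n:ℝ) := Nat.cast_nonneg n
  -- Step 1: expansion
  have hexp : ∫ ω, (∑ i, Y i ω)^N ∂P = ∑ p : Fin N → Fin n, Term p := by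
    have h1 : ∀ ω, (∑ i, Y i ω)^N = ∑ p : Fin N → Fin n, ∏ t, Y (p t) ω := by
      intro ω
      rw [Finset.sum_pow', Fintype.piFinset_univ]
    have hint : ∀ p : Fin N → Fin n, Integrable (fun ω => ∏ t, Y (p t) ω) P := by
      intro p
      refine integrable_of_abs_le (Finset.measurable_prod _ fun t _ => hmeas (p t)) (E^N) ?_
      intro ω
      rw [Finset.abs_prod]
      calc ∏ t, |Y (p t) ω| ≤ ∏ _t : Fin N, E :=
            Finset.prod_le_prod (fun _ _ => abs_nonneg _) (fun t _ => hbound _ _)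
        _ = E ^ N := by simp
    calc ∫ ω, (∑ i, Y i ω)^N ∂P
        = ∫ ω, ∑ p : Fin N → Fin n, ∏ t, Y (p t) ω ∂P := by simp_rw [h1]
      _ = ∑ p : Fin N → Fin n, ∫ ω, ∏ t, Y (p t) ω ∂P :=
          integral_finset_sum _ (fun p _ => hint p)
      _ = ∑ p : Fin N → Fin n, Term p := by
          refine Finset.sum_congr rfl fun p _ => ?_
          have h2 : ∀ ω, ∏ t, Y (p t) ω = ∏ i ∈ im p, (Y i ω)^(cnt p i) := by
            intro ω
            exact Finset.prod_comp (fun i => Y i ω) p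
          have hZmeas : ∀ i, Measurable (fun ω => (Y i ω)^(cnt p i)) :=
            fun i => (hmeas i).pow_const _
          have hZindep : iIndepFun
              (fun i ω => (Y i ω)^(cnt p i)) P :=
            hindep.comp (fun i (x : ℝ) => x^(cnt p i)) (fun i => measurable_id.pow_const _)
          calc ∫ ω, ∏ t, Y (p t) ω ∂P
              = ∫ ω, ∏ i ∈ im p, (Y i ω)^(cnt p i) ∂P := by simp_rw [h2]
            _ = ∏ i ∈ im p, ∫ ω, (Y i ω)^(cnt p i) ∂P :=
                integral_prod_of_indep hZmeas hZindep (im p)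
  -- membership in image gives positive count
  have hcntpos : ∀ (p : Fin N → Fin n) (i : Fin n), i ∈ im p → 1 ≤ cnt p i := by
    intro p i hi
    rcases Finset.mem_image.1 hi with ⟨t, _, ht⟩
    have : t ∈ Finset.univ.filter fun t => p t = i := by
      simp [ht]
    exact Finset.card_pos.2 ⟨t, this⟩
  have hsumcnt : ∀ p : Fin N → Fin n, ∑ i ∈ im p, cnt p i = N := by
    intro p
    have := Finset.card_eq_sum_card_image p (Finset.univ : Finset (Fin N))
    simpa using this.symm
  set A : Finset (Fin N → Fin n) :=
    Finset.univ.filter (fun p => ∀ i ∈ im p, 2 ≤ cnt p i) with hA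
  -- vanishing outside A
  have hz : ∀ p ∈ (Finset.univ : Finset (Fin N → Fin n)), p ∉ A → Term p = 0 := by
    intro p _ hp
    simp only [hA, Finset.mem_filter, Finset.mem_univ, true_and, not_forall] at hp
    rcases hp with ⟨i, hi, hlt⟩
    have h1 : cnt p i = 1 := by
      have := hcntpos p i hi
      omega
    refine Finset.prod_eq_zero hi ?_
    rw [h1]
    simpa using hmom1 i
  have hsumA : ∑ p : Fin N → Fin n, Term p = ∑ p ∈ A, Term p :=
    (Finset.sum_subset (Finset.subset_univ A) hz).symm
  -- cardinality of image is at most k on A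
  have hbk : ∀ p ∈ A, (im p).card ≤ k := by
    intro p hp
    simp only [hA, Finset.mem_filter] at hp
    have h2b : 2 * (im p).card ≤ N := by
      calc 2 * (im p).card = ∑ _i ∈ im p, 2 := by
            simp [Finset.sum_const, mul_comm]
        _ ≤ ∑ i ∈ im p, cnt p i := Finset.sum_le_sum (fun i hi => hp.2 i hi)
        _ = N := hsumcnt p
    omega
  -- per-term bound
  have hterm : ∀ p ∈ A, |Term p| ≤ M^k * (n:ℝ)^(k - (im p).card) := by
    intro p hp
    have hp2 : ∀ i ∈ im p, 2 ≤ cnt p i := by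
      simp only [hA, Finset.mem_filter] at hp
      exact hp.2
    set b := (im p).card with hb
    have hble : b ≤ k := hbk p hp
    have he : ∑ i ∈ im p, (cnt p i - 2) = 2*(k - b) := by
      have h1 : ∑ i ∈ im p, (cnt p i - 2 + 2) = N := by
        rw [Finset.sum_congr rfl fun i hi => Nat.sub_add_cancel (hp2 i hi)]
        exact hsumcnt p
      rw [Finset.sum_add_distrib, Finset.sum_const, smul_eq_mul] at h1
      omega
    calc |Term p| = ∏ i ∈ im p, |∫ ω, (Y i ω)^(cnt p i) ∂P| := Finset.abs_prod _ _
      _ ≤ ∏ i ∈ im p, (E^(cnt p i - 2) * V) :=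
          Finset.prod_le_prod (fun _ _ => abs_nonneg _) (fun i hi => hmom i _ (hp2 i hi))
      _ = (∏ i ∈ im p, E^(cnt p i - 2)) * V^b := by
          rw [Finset.prod_mul_distrib, Finset.prod_const]
      _ = E^(2*(k-b)) * V^b := by rw [Finset.prod_pow_eq_pow_sum, he]
      _ = (E^2)^(k-b) * V^b := by rw [pow_mul]
      _ ≤ (M * n)^(k-b) * M^b := by
          refine mul_le_mul (pow_le_pow_left₀ (sq_nonneg E) hE2 _)
            (pow_le_pow_left₀ hVnn hV b) (pow_nonneg hVnn b) (pow_nonneg ?_ _)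
          exact mul_nonneg hMnn hnnn
      _ = M^(k-b) * M^b * (n:ℝ)^(k-b) := by rw [mul_pow]; ring
      _ = M^k * (n:ℝ)^(k-b) := by rw [← pow_add, Nat.sub_add_cancel hble]
  -- counting
  have hcount : ∑ p ∈ A, (n:ℝ)^(k - (im p).card) ≤ ((k:ℝ)+1) * (k:ℝ)^N * (n:ℝ)^k := by
    have hmaps : ∀ p ∈ A, (im p).card ∈ Finset.range (k+1) :=
      fun p hp => Finset.mem_range.2 (Nat.lt_succ_of_le (hbk p hp))
    rw [← Finset.sum_fiberwise_of_maps_to hmaps (fun p => (n:ℝ)^(k - (im p).card))]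
    have hfiber : ∀ b ∈ Finset.range (k+1),
        ∑ p ∈ A.filter (fun p => (im p).card = b), (n:ℝ)^(k - (im p).card)
          ≤ (k:ℝ)^N * (n:ℝ)^k := by
      intro b hbmem
      have hbk' : b ≤ k := Nat.lt_succ_iff.1 (Finset.mem_range.1 hbmem)
      have hcard : (A.filter (fun p => (im p).card = b)).card ≤ n^b * k^N := by
        have hsub : A.filter (fun p => (im p).card = b) ⊆
            (Finset.powersetCard b (Finset.univ : Finset (Fin n))).biUnion
              (fun T => Fintype.piFinset fun _ : Fin N => T) := by
          intro p hp
          simp only [Finset.mem_filter] at hp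
          refine Finset.mem_biUnion.2 ⟨im p, ?_, ?_⟩
          · exact Finset.mem_powersetCard_univ.2 hp.2
          · exact Fintype.mem_piFinset.2 fun t => Finset.mem_image_of_mem p (Finset.mem_univ t)
        calc (A.filter (fun p => (im p).card = b)).card
            ≤ _ := Finset.card_le_card hsub
          _ ≤ ∑ T ∈ Finset.powersetCard b (Finset.univ : Finset (Fin n)),
                (Fintype.piFinset fun _ : Fin N => T).card := Finset.card_biUnion_le
          _ = ∑ T ∈ Finset.powersetCard b (Finset.univ : Finset (Fin n)), b^N := by
              refine Finset.sum_congr rfl fun T hT => ?_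
              rw [Fintype.card_piFinset]
              simp [(Finset.mem_powersetCard.1 hT).2]
          _ = (n.choose b) * b^N := by
              rw [Finset.sum_const, Finset.card_powersetCard, Finset.card_univ,
                Fintype.card_fin, smul_eq_mul]
          _ ≤ n^b * k^N := by
              exact Nat.mul_le_mul (Nat.choose_le_pow n b) (Nat.pow_le_pow_left hbk' N)
      calc ∑ p ∈ A.filter (fun p => (im p).card = b), (n:ℝ)^(k - (im p).card)
          = ∑ _p ∈ A.filter (fun p => (im p).card = b), (n:ℝ)^(k - b) := by
            refine Finset.sum_congr rfl fun p hp => ?_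
            rw [(Finset.mem_filter.1 hp).2]
        _ = ((A.filter (fun p => (im p).card = b)).card : ℝ) * (n:ℝ)^(k - b) := by
            rw [Finset.sum_const, nsmul_eq_mul]
        _ ≤ ((n^b * k^N : ℕ) : ℝ) * (n:ℝ)^(k - b) := by
            refine mul_le_mul_of_nonneg_right ?_ (pow_nonneg hnnn _)
            exact_mod_cast hcard
        _ = (k:ℝ)^N * ((n:ℝ)^b * (n:ℝ)^(k-b)) := by push_cast; ring
        _ = (k:ℝ)^N * (n:ℝ)^k := by rw [← pow_add, Nat.add_sub_cancel' hbk']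
    calc ∑ b ∈ Finset.range (k+1),
          ∑ p ∈ A.filter (fun p => (im p).card = b), (n:ℝ)^(k - (im p).card)
        ≤ ∑ _b ∈ Finset.range (k+1), (k:ℝ)^N * (n:ℝ)^k := Finset.sum_le_sum hfiber
      _ = ((k:ℝ)+1) * ((k:ℝ)^N * (n:ℝ)^k) := by
          rw [Finset.sum_const, Finset.card_range, nsmul_eq_mul]; push_cast; ring
      _ = ((k:ℝ)+1) * (k:ℝ)^N * (n:ℝ)^k := by ring
  -- combine
  calc |∫ ω, (∑ i, Y i ω)^N ∂P| = |∑ p ∈ A, Term p| := by rw [hexp, hsumA]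
    _ ≤ ∑ p ∈ A, |Term p| := Finset.abs_sum_le_sum_abs _ _
    _ ≤ ∑ p ∈ A, M^k * (n:ℝ)^(k - (im p).card) := Finset.sum_le_sum hterm
    _ = M^k * ∑ p ∈ A, (n:ℝ)^(k - (im p).card) := by rw [Finset.mul_sum]
    _ ≤ M^k * (((k:ℝ)+1) * (k:ℝ)^N * (n:ℝ)^k) := by
        refine mul_le_mul_of_nonneg_left hcount (pow_nonneg hMnn k)
    _ = ((k:ℝ)+1) * (k:ℝ)^(2*k) * M^k * (n:ℝ)^k := by rw [hN]; ring

/-- Moment bound for empirical needlet coefficients: for every `q ≥ 1` there is a constant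
`s_q`, depending only on `q`, `σ` and `c`, such that whenever `2^{jd} ≤ n`, the `Xᵢ` are
i.i.d., `|ψ| ≤ c·2^{jd/2}` and `E[ψ(X₁)²] ≤ σ²`, one has
`E[|β̂ − β|^q] ≤ s_q·n^{−q/2}`. -/
theorem stmt_8 (q σ c : ℝ) (hq : 1 ≤ q) (hσ : 0 < σ) (hc : 0 < c) :
    ∃ s : ℝ,
      ∀ (d j n : ℕ), 1 ≤ d → 1 ≤ n → (2 : ℝ) ^ (j * d) ≤ (n : ℝ) →
      ∀ (hn : 0 < n)
        (Ω : Type u) (_ : MeasurableSpace Ω) (P : Measure Ω), IsProbabilityMeasure P →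
      ∀ (S : Type v) (_ : MeasurableSpace S) (X : Fin n → Ω → S),
        (∀ i, Measurable (X i)) →
        iIndepFun X P →
        (∀ i, IdentDistrib (X i) (X ⟨0, hn⟩) P P) →
      ∀ ψ : S → ℝ, Measurable ψ →
        (∀ x, |ψ x| ≤ c * 2 ^ ((j * d : ℝ) / 2)) →
        (∫ ω, (ψ (X ⟨0, hn⟩ ω)) ^ 2 ∂P) ≤ σ ^ 2 →
        (∫ ω, |(n : ℝ)⁻¹ * ∑ i, ψ (X i ω) - ∫ ω', ψ (X ⟨0, hn⟩ ω') ∂P| ^ q ∂P) ≤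
          s * (n : ℝ) ^ (-(q / 2)) := by
  classical
  have hq0 : 0 < q := lt_of_lt_of_le one_pos hq
  set k : ℕ := ⌈q/2⌉₊ with hkdef
  have hk1 : 1 ≤ k := by
    rw [hkdef]
    exact Nat.one_le_iff_ne_zero.2 (by
      simp only [ne_eq, Nat.ceil_eq_zero, not_le]
      linarith)
  have hq2k : q ≤ 2*(k:ℝ) := by
    have h1 : q/2 ≤ (k:ℝ) := Nat.le_ceil (q/2)
    linarith
  set M : ℝ := max 1 (max (4*c^2) (σ^2)) with hMdef
  have hM1 : (1:ℝ) ≤ M := le_max_left _ _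
  have hM0 : (0:ℝ) ≤ M := le_trans zero_le_one hM1
  set K0 : ℝ := ((k:ℝ)+1) * (k:ℝ)^(2*k) * M^k with hK0
  have hK0nn : 0 ≤ K0 := by positivity
  refine ⟨1 + K0, ?_⟩
  intro d j n hd hn1 h2n hn Ω mΩ P hP S mS X hXm hXi hXd ψ hψm hψb hψ2
  haveI := hP
  have hn0 : (n:ℝ) ≠ 0 := Nat.cast_ne_zero.2 (by omega)
  have hnpos : (0:ℝ) < n := by positivity
  have hn1' : (1:ℝ) ≤ n := by exact_mod_cast hn1
  set X₀ : Ω → S := X ⟨0, hn⟩ with hX₀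
  set β : ℝ := ∫ ω', ψ (X₀ ω') ∂P with hβ
  set B : ℝ := c * 2 ^ ((j * d : ℝ) / 2) with hBdef
  have hBpos : 0 < B := by
    rw [hBdef]
    positivity
  -- (2B)^2 ≤ 4c^2 n
  have hrp : ((2:ℝ) ^ ((j * d : ℝ) / 2))^2 = (2:ℝ) ^ (j*d : ℕ) := by
    rw [← Real.rpow_natCast ((2:ℝ) ^ ((j * d : ℝ) / 2)) 2,
      ← Real.rpow_mul (by norm_num : (0:ℝ) ≤ 2)]
    rw [show ((j:ℝ) * (d:ℝ) / 2 * ((2:ℕ):ℝ)) = ((j*d : ℕ) : ℝ) by push_cast; ring,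
      Real.rpow_natCast]
  have hB2 : (2*B)^2 ≤ M * n := by
    have h1 : (2*B)^2 = 4*c^2 * ((2:ℝ) ^ ((j * d : ℝ) / 2))^2 := by rw [hBdef]; ring
    rw [h1, hrp]
    calc 4*c^2 * (2:ℝ)^(j*d : ℕ) ≤ 4*c^2 * n := by
          refine mul_le_mul_of_nonneg_left h2n (by positivity)
      _ ≤ M * n := by
          refine mul_le_mul_of_nonneg_right ?_ (le_of_lt hnpos)
          exact le_trans (le_max_left _ _) (le_max_right _ _)
  -- basic integrability
  have hφm : Measurable (fun ω => ψ (X₀ ω)) := hψm.comp (hXm _)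
  have hφint : Integrable (fun ω => ψ (X₀ ω)) P :=
    integrable_of_abs_le hφm B (fun ω => hψb _)
  have hβB : |β| ≤ B := by
    rw [hβ]
    calc |∫ ω', ψ (X₀ ω') ∂P| ≤ ∫ ω', |ψ (X₀ ω')| ∂P := by
          simpa [Real.norm_eq_abs] using norm_integral_le_integral_norm (fun ω' => ψ (X₀ ω'))
      _ ≤ ∫ _ω', B ∂P := by
          refine integral_mono hφint.abs (integrable_const B) (fun ω => hψb _)
      _ = B := by simp
  set g : S → ℝ := fun x => ψ x - β with hgdef
  have hgm : Measurable g := hψm.sub measurable_const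
  have hgB : ∀ x, |g x| ≤ 2*B := by
    intro x
    rw [hgdef]
    calc |ψ x - β| ≤ |ψ x| + |β| := abs_sub _ _
      _ ≤ B + B := add_le_add (hψb x) hβB
      _ = 2*B := by ring
  set Y : Fin n → Ω → ℝ := fun i ω => g (X i ω) with hYdef
  have hYm : ∀ i, Measurable (Y i) := fun i => hgm.comp (hXm i)
  have hYB : ∀ i ω, |Y i ω| ≤ 2*B := fun i ω => hgB _
  set μr : ℕ → ℝ := fun r => ∫ ω, (g (X₀ ω))^r ∂P with hμr
  have hgint : ∀ (i : Fin n) (r : ℕ), Integrable (fun ω => (g (X i ω))^r) P := by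
    intro i r
    refine integrable_of_abs_le ((hgm.comp (hXm i)).pow_const r) ((2*B)^r) ?_
    intro ω
    rw [abs_pow]
    exact pow_le_pow_left₀ (abs_nonneg _) (hgB _) r
  have hid : ∀ (i : Fin n) (r : ℕ), ∫ ω, (g (X i ω))^r ∂P = μr r := by
    intro i r
    have h := ((hXd i).comp (u := fun x => (g x)^r) (hgm.pow_const r)).integral_eq
    simpa [Function.comp] using h
  have hμ1 : μr 1 = 0 := by
    rw [hμr]
    simp only [pow_one, hgdef]
    rw [integral_sub hφint (integrable_const β), integral_const]
    simp [hβ]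
  have hV0 : 0 ≤ μr 2 := integral_nonneg (fun ω => sq_nonneg _)
  have hVσ : μr 2 ≤ σ^2 := by
    have hφ2 : Integrable (fun ω => (ψ (X₀ ω))^2) P := by
      refine integrable_of_abs_le (hφm.pow_const 2) (B^2) ?_
      intro ω
      rw [abs_pow]
      exact pow_le_pow_left₀ (abs_nonneg _) (hψb _) 2
    have hptw : (fun ω => (g (X₀ ω))^2)
        = fun ω => ((ψ (X₀ ω))^2 - (2*β) * ψ (X₀ ω)) + β^2 := by
      funext ω
      rw [hgdef]
      ring
    have hcalc : μr 2 = (∫ ω, (ψ (X₀ ω))^2 ∂P) - β^2 := by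
      show (∫ ω, (g (X₀ ω))^2 ∂P) = _
      have hint1 : Integrable (fun ω => (2*β) * ψ (X₀ ω)) P := hφint.const_mul _
      have hint2 : Integrable (fun ω => (ψ (X₀ ω))^2 - (2*β) * ψ (X₀ ω)) P := hφ2.sub hint1
      rw [hptw, integral_add hint2 (integrable_const _),
        integral_sub hφ2 hint1, integral_const_mul, integral_const]
      simp [← hβ]
      ring
    nlinarith [sq_nonneg β, hψ2]
  have hmom : ∀ (i : Fin n) (r : ℕ), 2 ≤ r →
      |∫ ω, (Y i ω)^r ∂P| ≤ (2*B)^(r-2) * μr 2 := by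
    intro i r hr
    have h1 : ∫ ω, (Y i ω)^r ∂P = μr r := hid i r
    rw [h1]
    have hpt : ∀ ω, |(g (X₀ ω))^r| ≤ (2*B)^(r-2) * (g (X₀ ω))^2 := by
      intro ω
      rw [abs_pow]
      calc |g (X₀ ω)|^r = |g (X₀ ω)|^(r-2) * |g (X₀ ω)|^2 := by
            rw [← pow_add, Nat.sub_add_cancel hr]
        _ ≤ (2*B)^(r-2) * |g (X₀ ω)|^2 := by
            refine mul_le_mul_of_nonneg_right
              (pow_le_pow_left₀ (abs_nonneg _) (hgB _) _) (by positivity)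
        _ = (2*B)^(r-2) * (g (X₀ ω))^2 := by rw [sq_abs]
    have habs : |μr r| ≤ ∫ ω, |(g (X₀ ω))^r| ∂P := by
      show |∫ ω, (g (X₀ ω))^r ∂P| ≤ _
      simpa [Real.norm_eq_abs] using norm_integral_le_integral_norm (fun ω => (g (X₀ ω))^r)
    calc |μr r| ≤ ∫ ω, |(g (X₀ ω))^r| ∂P := habs
      _ ≤ ∫ ω, (2*B)^(r-2) * (g (X₀ ω))^2 ∂P :=
          integral_mono (hgint _ r).abs ((hgint _ 2).const_mul _) hpt
      _ = (2*B)^(r-2) * μr 2 := by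
          rw [integral_const_mul]
  have hmom1 : ∀ i, ∫ ω, Y i ω ∂P = 0 := by
    intro i
    have : ∫ ω, (g (X i ω))^1 ∂P = μr 1 := hid i 1
    simpa [hμ1] using this
  have hYindep : iIndepFun Y P :=
    hXi.comp (fun _ => g) (fun _ => hgm)
  have hkey : |∫ ω, (∑ i, Y i ω)^(2*k) ∂P| ≤ K0 * (n:ℝ)^k := by
    have := even_moment_bound k hk1 (2*B) (μr 2) M (by positivity) hV0 hM1
      hYm hYindep hYB hmom1 hmom hB2
      (le_trans hVσ (le_trans (le_max_right _ _) (le_max_right _ _)))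
    rw [hK0]
    linarith [this]
  -- final analytic part
  set W : Ω → ℝ := fun ω => (n:ℝ)⁻¹ * ∑ i, Y i ω with hWdef
  have hWmeas : Measurable W := by
    apply Measurable.const_mul
    exact Finset.measurable_sum Finset.univ (fun i _ => hYm i)
  have hWeq : ∀ ω, (n:ℝ)⁻¹ * ∑ i, ψ (X i ω) - β = W ω := by
    intro ω
    show _ = (n:ℝ)⁻¹ * ∑ i, Y i ω
    have h1 : ∑ i, Y i ω = (∑ i, ψ (X i ω)) - (n:ℝ) * β := by
      rw [hYdef]
      simp only [hgdef]
      rw [Finset.sum_sub_distrib, Finset.sum_const, Finset.card_univ, Fintype.card_fin,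
        nsmul_eq_mul]
    rw [h1]
    field_simp
  have hWB : ∀ ω, |W ω| ≤ 2*B := by
    intro ω
    rw [hWdef]
    rw [abs_mul, abs_inv, Nat.abs_cast]
    have h2 : |∑ i, Y i ω| ≤ (n:ℝ) * (2*B) := by
      calc |∑ i, Y i ω| ≤ ∑ i, |Y i ω| := Finset.abs_sum_le_sum_abs _ _
        _ ≤ ∑ _i : Fin n, 2*B := Finset.sum_le_sum (fun i _ => hYB i ω)
        _ = (n:ℝ) * (2*B) := by
            rw [Finset.sum_const, Finset.card_univ, Fintype.card_fin, nsmul_eq_mul]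
    calc (n:ℝ)⁻¹ * |∑ i, Y i ω| ≤ (n:ℝ)⁻¹ * ((n:ℝ)*(2*B)) :=
          mul_le_mul_of_nonneg_left h2 (by positivity)
      _ = 2*B := by field_simp
  have hWint : Integrable (fun ω => (W ω)^(2*k)) P := by
    refine integrable_of_abs_le (hWmeas.pow_const _) ((2*B)^(2*k)) ?_
    intro ω; rw [abs_pow]; exact pow_le_pow_left₀ (abs_nonneg _) (hWB ω) _
  set t : ℝ := (n:ℝ) ^ (-(1/2) : ℝ) with htdef
  have ht : 0 < t := Real.rpow_pos_of_pos hnpos _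
  have hWknn : ∀ x : ℝ, 0 ≤ x^(2*k) := fun x => (even_two_mul k).pow_nonneg x
  have hpt : ∀ ω, |W ω| ^ q ≤ t^q + t^(q - ((2*k : ℕ) : ℝ)) * (W ω)^(2*k) := by
    intro ω
    have ha : 0 ≤ |W ω| := abs_nonneg _
    have hWk : |W ω| ^ ((2*k : ℕ) : ℝ) = (W ω)^(2*k) := by
      rw [Real.rpow_natCast, pow_abs, abs_of_nonneg (hWknn _)]
    have h2knn : q - ((2*k:ℕ):ℝ) ≤ 0 := by push_cast; linarith
    rcases le_or_gt (|W ω|) t with h | h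
    · have h1 : |W ω| ^ q ≤ t ^ q := Real.rpow_le_rpow ha h (le_of_lt hq0)
      have h2 : 0 ≤ t^(q - ((2*k:ℕ):ℝ)) * (W ω)^(2*k) :=
        mul_nonneg (Real.rpow_nonneg (le_of_lt ht) _) (hWknn _)
      linarith
    · have ha0 : 0 < |W ω| := lt_trans ht h
      have hsplit : |W ω| ^ q = |W ω| ^ ((2*k:ℕ):ℝ) * |W ω| ^ (q - ((2*k:ℕ):ℝ)) := by
        rw [← Real.rpow_add ha0]; ring_nf
      have h3 : |W ω| ^ (q - ((2*k:ℕ):ℝ)) ≤ t ^ (q - ((2*k:ℕ):ℝ)) :=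
        Real.rpow_le_rpow_of_nonpos ht (le_of_lt h) h2knn
      have h4 : 0 ≤ t ^ q := Real.rpow_nonneg (le_of_lt ht) q
      calc |W ω| ^ q = (W ω)^(2*k) * |W ω| ^ (q - ((2*k:ℕ):ℝ)) := by rw [hsplit, hWk]
        _ ≤ (W ω)^(2*k) * t ^ (q - ((2*k:ℕ):ℝ)) :=
            mul_le_mul_of_nonneg_left h3 (hWknn _)
        _ = t^(q - ((2*k:ℕ):ℝ)) * (W ω)^(2*k) := by ring
        _ ≤ t^q + t^(q - ((2*k:ℕ):ℝ)) * (W ω)^(2*k) := by linarith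
  have hLHS : (∫ ω, |(n : ℝ)⁻¹ * ∑ i, ψ (X i ω) - β| ^ q ∂P)
      ≤ t^q + t^(q - ((2*k:ℕ):ℝ)) * ∫ ω, (W ω)^(2*k) ∂P := by
    have h1 : (∫ ω, |(n : ℝ)⁻¹ * ∑ i, ψ (X i ω) - β| ^ q ∂P)
        = ∫ ω, |W ω| ^ q ∂P := by
      refine integral_congr_ae (Filter.Eventually.of_forall fun ω => ?_)
      show |(n : ℝ)⁻¹ * ∑ i, ψ (X i ω) - β| ^ q = |W ω| ^ q
      rw [hWeq ω]
    rw [h1]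
    have h2 : ∫ ω, |W ω| ^ q ∂P
        ≤ ∫ ω, (t^q + t^(q - ((2*k:ℕ):ℝ)) * (W ω)^(2*k)) ∂P :=
      integral_mono_of_nonneg
        (Filter.Eventually.of_forall fun ω => Real.rpow_nonneg (abs_nonneg _) q)
        ((integrable_const _).add (hWint.const_mul _)) (Filter.Eventually.of_forall hpt)
    refine le_trans h2 (le_of_eq ?_)
    rw [integral_add (integrable_const _) (hWint.const_mul _), integral_const,
      integral_const_mul]
    simp
  have hWint2 : ∫ ω, (W ω)^(2*k) ∂P ≤ K0 * ((n:ℝ)^k)⁻¹ := by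
    have h1 : ∀ ω, (W ω)^(2*k) = ((n:ℝ)⁻¹)^(2*k) * (∑ i, Y i ω)^(2*k) := by
      intro ω; rw [hWdef, mul_pow]
    have h2 : ∫ ω, (W ω)^(2*k) ∂P = ((n:ℝ)⁻¹)^(2*k) * ∫ ω, (∑ i, Y i ω)^(2*k) ∂P := by
      simp_rw [h1]; rw [integral_const_mul]
    rw [h2]
    have h3 : ∫ ω, (∑ i, Y i ω)^(2*k) ∂P ≤ K0 * (n:ℝ)^k := le_trans (le_abs_self _) hkey
    calc ((n:ℝ)⁻¹)^(2*k) * ∫ ω, (∑ i, Y i ω)^(2*k) ∂P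
        ≤ ((n:ℝ)⁻¹)^(2*k) * (K0 * (n:ℝ)^k) := mul_le_mul_of_nonneg_left h3 (by positivity)
      _ = K0 * ((n:ℝ)^k)⁻¹ := by
          have hnk : ((n:ℝ)^k) ≠ 0 := by positivity
          rw [inv_pow, two_mul, pow_add]
          field_simp
  have htq : t^q = (n:ℝ) ^ (-(q/2)) := by
    rw [htdef, ← Real.rpow_mul (le_of_lt hnpos)]
    congr 1
    ring
  have htq2 : t^(q - ((2*k:ℕ):ℝ)) * ((n:ℝ)^k)⁻¹ = (n:ℝ) ^ (-(q/2)) := by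
    rw [htdef, ← Real.rpow_mul (le_of_lt hnpos),
      show ((n:ℝ)^k)⁻¹ = (n:ℝ) ^ (-(k:ℝ)) by
        rw [← Real.rpow_natCast (n:ℝ) k, ← Real.rpow_neg (le_of_lt hnpos)],
      ← Real.rpow_add hnpos]
    congr 1
    push_cast
    ring
  have htpow : 0 ≤ t^(q - ((2*k:ℕ):ℝ)) := Real.rpow_nonneg (le_of_lt ht) _
  calc (∫ ω, |(n : ℝ)⁻¹ * ∑ i, ψ (X i ω) - β| ^ q ∂P)
      ≤ t^q + t^(q - ((2*k:ℕ):ℝ)) * ∫ ω, (W ω)^(2*k) ∂P := hLHS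
    _ ≤ t^q + t^(q - ((2*k:ℕ):ℝ)) * (K0 * ((n:ℝ)^k)⁻¹) := by
        have := mul_le_mul_of_nonneg_left hWint2 htpow
        linarith
    _ = (n:ℝ) ^ (-(q/2)) + K0 * (t^(q - ((2*k:ℕ):ℝ)) * ((n:ℝ)^k)⁻¹) := by
        rw [htq]; ring
    _ = (1 + K0) * (n:ℝ) ^ (-(q/2)) := by rw [htq2]; ring
end

section
/- Let d ≥ 1, j ∈ ℕ, n ≥ 2 with 2^{jd} ≤ n/log n, and let X₁, …, Xₙ be i.i.d. random variables with values in a measurable space S. Let ψ : S → ℝ be measurable with |ψ(x)| ≤ c·2^{jd/2} for all x and E[ψ(X₁)²] ≤ σ², where c, σ > 0. Set β = E[ψ(X₁)] and β̂ = n^{−1}·Σ_{i=1}^n ψ(Xᵢ). Then there exists a constant γ > 0, depending only on c, such that for every κ ≥ 6σ², P(|β̂ − β| ≥ (κ/2)·√(log n / n)) ≤ 2·n^{−γκ}. -/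
open MeasureTheory ProbabilityTheory Real

/-- `exp u ≤ 1 + u + u²` for `|u| ≤ 1`. -/
lemma exp_le_quad {u : ℝ} (hu : |u| ≤ 1) : Real.exp u ≤ 1 + u + u ^ 2 := by
  have h := Real.exp_bound hu (n := 2) (by norm_num)
  have h2 : ∑ m ∈ Finset.range 2, u ^ m / m.factorial = 1 + u := by
    simp [Finset.sum_range_succ]
  rw [h2] at h
  have h3 : |u| ^ 2 * ((2:ℕ).succ / ((2:ℕ).factorial * 2)) = (3/4) * u ^ 2 := by
    rw [sq_abs]; norm_num [Nat.factorial]; ring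
  have h4 := (abs_sub_le_iff.1 h).1
  have h5 : |u| ^ 2 = u ^ 2 := sq_abs u
  rw [h5] at h4
  norm_num [Nat.factorial] at h4
  nlinarith [sq_nonneg u]

/-- helper: bounded measurable functions are integrable on a probability measure -/
lemma integrable_of_bdd {Ω : Type*} [MeasurableSpace Ω] {P : Measure Ω} [IsProbabilityMeasure P]
    {f : Ω → ℝ} (hf : Measurable f) {C : ℝ} (h : ∀ ω, ‖f ω‖ ≤ C) : Integrable f P :=
  (integrable_const C).mono' hf.aestronglyMeasurable (Filter.Eventually.of_forall h)

/-- mgf bound for a centered bounded random variable. -/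
lemma mgf_le_of_bdd {Ω : Type*} [MeasurableSpace Ω] {P : Measure Ω} [IsProbabilityMeasure P]
    {Y : Ω → ℝ} (hY : Measurable Y) {B v l : ℝ}
    (hB : ∀ ω, |Y ω| ≤ B) (hmean : ∫ ω, Y ω ∂P = 0) (hvar : ∫ ω, (Y ω) ^ 2 ∂P ≤ v)
    (hl : 0 ≤ l) (hlB : l * B ≤ 1) :
    mgf Y P l ≤ Real.exp (l ^ 2 * v) := by
  have hu : ∀ ω, |l * Y ω| ≤ 1 := by
    intro ω
    rw [abs_mul, abs_of_nonneg hl]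
    calc l * |Y ω| ≤ l * B := mul_le_mul_of_nonneg_left (hB ω) hl
      _ ≤ 1 := hlB
  have hYint : Integrable Y P := integrable_of_bdd hY (fun ω => by
    simpa [Real.norm_eq_abs] using hB ω)
  have hY2int : Integrable (fun ω => (Y ω) ^ 2) P := by
    refine integrable_of_bdd (hY.pow_const 2) (C := B ^ 2) (fun ω => ?_)
    rw [Real.norm_eq_abs, abs_pow, sq_abs, ← sq_abs]
    exact pow_le_pow_left₀ (abs_nonneg _) (hB ω) 2
  have hexpint : Integrable (fun ω => Real.exp (l * Y ω)) P := by
    refine integrable_of_bdd ((hY.const_mul l).exp) (C := Real.exp 1) (fun ω => ?_)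
    rw [Real.norm_eq_abs, abs_of_pos (Real.exp_pos _)]
    exact Real.exp_le_exp.2 ((le_abs_self _).trans (hu ω))
  have hRHSint : Integrable (fun ω => 1 + l * Y ω + l ^ 2 * (Y ω) ^ 2) P := by
    exact ((integrable_const 1).add (hYint.const_mul l)).add (hY2int.const_mul (l ^ 2))
  have key : mgf Y P l ≤ ∫ ω, (1 + l * Y ω + l ^ 2 * (Y ω) ^ 2) ∂P := by
    refine integral_mono hexpint hRHSint (fun ω => ?_)
    have := exp_le_quad (hu ω)
    nlinarith [this]
  have hcalc : ∫ ω, (1 + l * Y ω + l ^ 2 * (Y ω) ^ 2) ∂P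
      = 1 + l * (∫ ω, Y ω ∂P) + l ^ 2 * (∫ ω, (Y ω) ^ 2 ∂P) := by
    have i1 : ∫ ω, (1 + l * Y ω + l ^ 2 * (Y ω) ^ 2) ∂P
        = (∫ ω, (1 + l * Y ω) ∂P) + ∫ ω, l ^ 2 * (Y ω) ^ 2 ∂P :=
      integral_add ((integrable_const 1).add (hYint.const_mul l)) (hY2int.const_mul (l ^ 2))
    have i2 : ∫ ω, (1 + l * Y ω) ∂P = (∫ _ω, (1:ℝ) ∂P) + ∫ ω, l * Y ω ∂P :=
      integral_add (integrable_const 1) (hYint.const_mul l)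
    rw [i1, i2, integral_const, integral_const_mul, integral_const_mul]
    simp
  rw [hcalc, hmean] at key
  have : 1 + l * 0 + l ^ 2 * (∫ ω, (Y ω) ^ 2 ∂P) ≤ 1 + l ^ 2 * v := by
    nlinarith [sq_nonneg l]
  calc mgf Y P l ≤ 1 + l ^ 2 * v := key.trans this
    _ ≤ Real.exp (l ^ 2 * v) := by linarith [Real.add_one_le_exp (l ^ 2 * v)]

universe u v


lemma oneSided {Ω : Type u} [MeasurableSpace Ω] {P : Measure Ω} [IsProbabilityMeasure P]
    {n : ℕ} {S : Type v} [MeasurableSpace S] (X : Fin n → Ω → S)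
    (hXm : ∀ i, Measurable (X i))
    (hind : iIndepFun X P)
    (i₀ : Fin n) (hid : ∀ i, IdentDistrib (X i) (X i₀) P P)
    (φ : S → ℝ) (hφ : Measurable φ) (B v l ε : ℝ)
    (hB : ∀ x, |φ x| ≤ B)
    (hmean : ∫ ω, φ (X i₀ ω) ∂P = 0)
    (hvar : ∫ ω, (φ (X i₀ ω)) ^ 2 ∂P ≤ v)
    (hl : 0 ≤ l) (hlB : l * B ≤ 1) :
    (P {ω | ε ≤ ∑ i, φ (X i ω)}).toReal ≤ Real.exp (-l * ε) * Real.exp (n * (l ^ 2 * v)) := by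
  set Y : Fin n → Ω → ℝ := fun i ω => φ (X i ω) with hYdef
  have hYm : ∀ i, Measurable (Y i) := fun i => hφ.comp (hXm i)
  have hYind : iIndepFun Y P := hind.comp (fun _ => φ) (fun _ => hφ)
  have hint : ∀ i : Fin n, Integrable (fun ω => Real.exp (l * Y i ω)) P := by
    intro i
    refine (integrable_const (Real.exp (l * B))).mono'
      ((hYm i).const_mul l).exp.aestronglyMeasurable (Filter.Eventually.of_forall fun ω => ?_)
    rw [Real.norm_eq_abs, abs_of_pos (Real.exp_pos _)]
    refine Real.exp_le_exp.2 ?_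
    calc l * Y i ω ≤ l * |Y i ω| := mul_le_mul_of_nonneg_left (le_abs_self _) hl
      _ ≤ l * B := mul_le_mul_of_nonneg_left (hB _) hl
  have hsumint : Integrable (fun ω => Real.exp (l * (∑ i, Y i) ω)) P :=
    hYind.integrable_exp_mul_sum hYm (fun i _ => hint i)
  have hset : {ω | ε ≤ ∑ i, φ (X i ω)} = {ω | ε ≤ (∑ i, Y i) ω} := by
    ext ω; simp [hYdef, Finset.sum_apply]
  have hcher := measure_ge_le_exp_mul_mgf (μ := P) (X := ∑ i, Y i) ε hl hsumint
  rw [hset]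
  refine hcher.trans ?_
  have hmgf_sum : mgf (∑ i, Y i) P l = ∏ i, mgf (Y i) P l :=
    hYind.mgf_sum hYm Finset.univ
  have hmgf_i : ∀ i : Fin n, mgf (Y i) P l = mgf (Y i₀) P l := by
    intro i
    have hident : IdentDistrib (Y i) (Y i₀) P P := (hid i).comp hφ
    have := (hident.comp (show Measurable (fun y : ℝ => Real.exp (l * y)) from
      (measurable_id.const_mul l).exp)).integral_eq
    simpa [mgf, Function.comp] using this
  have hmgf0 : mgf (Y i₀) P l ≤ Real.exp (l ^ 2 * v) :=
    mgf_le_of_bdd (hYm i₀) (fun ω => hB _) hmean hvar hl hlB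
  have hprod : ∏ i, mgf (Y i) P l ≤ Real.exp (n * (l ^ 2 * v)) := by
    calc ∏ i : Fin n, mgf (Y i) P l = (mgf (Y i₀) P l) ^ n := by
          rw [Finset.prod_congr rfl (fun i _ => hmgf_i i), Finset.prod_const,
            Finset.card_univ, Fintype.card_fin]
      _ ≤ (Real.exp (l ^ 2 * v)) ^ n := pow_le_pow_left₀ mgf_nonneg hmgf0 n
      _ = Real.exp (n * (l ^ 2 * v)) := by rw [← Real.exp_nat_mul]
  rw [hmgf_sum]
  exact mul_le_mul_of_nonneg_left hprod (le_of_lt (Real.exp_pos _))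

lemma num_case1 {γ κ L σ : ℝ} (hγle : γ ≤ 3 / 8) (hκ : 6 * σ ^ 2 ≤ κ)
    (hκ0 : 0 < κ) (hL : 0 < L) : γ * κ * L * (16 * σ ^ 2) ≤ κ ^ 2 * L := by
  nlinarith [mul_pos hκ0 hL, sq_nonneg σ, mul_nonneg (mul_nonneg hκ0.le hL.le) (sq_nonneg σ)]

set_option maxHeartbeats 2000000

/-- Large-deviation bound for empirical needlet coefficients at the thresholding scale
`t_n = √(log n / n)`: there is `γ > 0`, depending only on `c`, such that for every
`κ ≥ 6σ²`, `P(|β̂ − β| ≥ (κ/2)·√(log n/n)) ≤ 2·n^{−γκ}`. -/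
theorem stmt_10 (c : ℝ) (hc : 0 < c) :
    ∃ γ : ℝ, 0 < γ ∧
      ∀ (d j n : ℕ), 1 ≤ d → 2 ≤ n → (2 : ℝ) ^ (j * d) ≤ (n : ℝ) / Real.log n →
      ∀ (hn : 0 < n)
        (Ω : Type u) (_ : MeasurableSpace Ω) (P : Measure Ω), IsProbabilityMeasure P →
      ∀ (S : Type v) (_ : MeasurableSpace S) (X : Fin n → Ω → S),
        (∀ i, Measurable (X i)) →
        iIndepFun X P →
        (∀ i, IdentDistrib (X i) (X ⟨0, hn⟩) P P) →
      ∀ (σ : ℝ), 0 < σ →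
      ∀ ψ : S → ℝ, Measurable ψ →
        (∀ x, |ψ x| ≤ c * 2 ^ ((j * d : ℝ) / 2)) →
        (∫ ω, (ψ (X ⟨0, hn⟩ ω)) ^ 2 ∂P) ≤ σ ^ 2 →
      ∀ κ : ℝ, 6 * σ ^ 2 ≤ κ →
        P {ω | κ / 2 * Real.sqrt (Real.log n / n) ≤
            |(n : ℝ)⁻¹ * ∑ i, ψ (X i ω) - ∫ ω', ψ (X ⟨0, hn⟩ ω') ∂P|} ≤
          ENNReal.ofReal (2 * (n : ℝ) ^ (-(γ * κ))) := by
  refine ⟨1 / (8 * (c + 1)), by positivity, ?_⟩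
  intro d j n hd hn2 hjd hn Ω mΩ P hP S mS X hXm hind hid σ hσ ψ hψm hψb hψvar κ hκ
  set γ : ℝ := 1 / (8 * (c + 1)) with hγdef
  have hγ0 : 0 < γ := by positivity
  have hγle : γ ≤ 3 / 8 := by
    rw [hγdef, div_le_div_iff₀ (by positivity) (by norm_num)]
    nlinarith
  have hγc : γ ≤ 1 / (8 * c) := by
    rw [hγdef]
    exact one_div_le_one_div_of_le (by positivity) (by linarith)
  have hn0 : (0 : ℝ) < n := by positivity
  have hn1 : (1 : ℝ) < n := by exact_mod_cast hn2
  set L : ℝ := Real.log n with hLdef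
  have hL : 0 < L := Real.log_pos hn1
  have hκ0 : 0 < κ := lt_of_lt_of_le (by positivity) hκ
  set β : ℝ := ∫ ω', ψ (X ⟨0, hn⟩ ω') ∂P with hβdef
  set f : Ω → ℝ := fun ω => ψ (X ⟨0, hn⟩ ω) with hfdef
  have hfm : Measurable f := hψm.comp (hXm _)
  set M : ℝ := c * 2 ^ ((j * d : ℝ) / 2) with hMdef
  have hM0 : 0 < M := by rw [hMdef]; positivity
  have hfb : ∀ ω, |f ω| ≤ M := fun ω => hψb _
  have hf_int : Integrable f P :=
    integrable_of_bdd hfm (fun ω => by simpa [Real.norm_eq_abs] using hfb ω)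
  have hf2_int : Integrable (fun ω => f ω ^ 2) P := by
    refine integrable_of_bdd (hfm.pow_const 2) (C := M ^ 2) (fun ω => ?_)
    rw [Real.norm_eq_abs, abs_pow, sq_abs, ← sq_abs]
    exact pow_le_pow_left₀ (abs_nonneg _) (hfb ω) 2
  have hβint : β = ∫ ω, f ω ∂P := rfl
  have hβM : |β| ≤ M := by
    rw [hβint]
    calc |∫ ω, f ω ∂P| ≤ ∫ ω, |f ω| ∂P := by
          simpa [Real.norm_eq_abs] using norm_integral_le_integral_norm (μ := P) f
      _ ≤ ∫ _ω, M ∂P := integral_mono hf_int.abs (integrable_const M) (fun ω => hfb ω)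
      _ = M := by simp
  -- mean / variance of the centered variables
  have hmean1 : ∫ ω, (ψ (X ⟨0, hn⟩ ω) - β) ∂P = 0 := by
    have : ∫ ω, (f ω - β) ∂P = 0 := by
      rw [integral_sub hf_int (integrable_const β), ← hβint, integral_const]
      simp
    exact this
  have hmean2 : ∫ ω, (β - ψ (X ⟨0, hn⟩ ω)) ∂P = 0 := by
    have : ∫ ω, (β - f ω) ∂P = 0 := by
      rw [integral_sub (integrable_const β) hf_int, ← hβint, integral_const]
      simp
    exact this
  have hvar1 : ∫ ω, (ψ (X ⟨0, hn⟩ ω) - β) ^ 2 ∂P ≤ σ ^ 2 := by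
    have hsq : ∀ ω, (f ω - β) ^ 2 = (f ω ^ 2 - 2 * β * f ω) + β ^ 2 := fun ω => by ring
    have i1 : ∫ ω, (f ω - β) ^ 2 ∂P
        = (∫ ω, (f ω ^ 2 - 2 * β * f ω) ∂P) + ∫ _ω, β ^ 2 ∂P := by
      simp_rw [hsq]
      exact integral_add (hf2_int.sub (hf_int.const_mul (2 * β))) (integrable_const _)
    have i2 : ∫ ω, (f ω ^ 2 - 2 * β * f ω) ∂P
        = (∫ ω, f ω ^ 2 ∂P) - ∫ ω, 2 * β * f ω ∂P :=
      integral_sub hf2_int (hf_int.const_mul (2 * β))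
    have i3 : ∫ ω, 2 * β * f ω ∂P = 2 * β * ∫ ω, f ω ∂P := integral_const_mul _ _
    have i4 : ∫ ω, (f ω - β) ^ 2 ∂P = (∫ ω, f ω ^ 2 ∂P) - β ^ 2 := by
      rw [i1, i2, i3, ← hβint, integral_const]
      simp
      ring
    have h5 : ∫ ω, f ω ^ 2 ∂P ≤ σ ^ 2 := hψvar
    show ∫ ω, (f ω - β) ^ 2 ∂P ≤ σ ^ 2
    rw [i4]
    linarith only [h5, sq_nonneg β]
  have hvar2 : ∫ ω, (β - ψ (X ⟨0, hn⟩ ω)) ^ 2 ∂P ≤ σ ^ 2 := by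
    have h : ∀ ω, (β - ψ (X ⟨0, hn⟩ ω)) ^ 2 = (ψ (X ⟨0, hn⟩ ω) - β) ^ 2 := fun ω => by ring
    simp_rw [h]
    exact hvar1
  -- bound on the centered variable
  set B : ℝ := 2 * M with hBdef
  have hB0 : 0 < B := by rw [hBdef]; linarith
  have hb1 : ∀ x, |ψ x - β| ≤ B := fun x => by
    have h1 := abs_le.1 (hψb x)
    have h2 := abs_le.1 hβM
    rw [hBdef, abs_le]
    constructor <;> [linarith only [h1.1, h2.2]; linarith only [h1.2, h2.1]]
  have hb2 : ∀ x, |β - ψ x| ≤ B := fun x => by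
    have := hb1 x
    rwa [abs_sub_comm] at this
  set t : ℝ := κ / 2 * Real.sqrt (L / n) with htdef
  have ht0 : 0 ≤ t := by rw [htdef]; positivity
  set l : ℝ := min (t / (2 * σ ^ 2)) (1 / B) with hldef
  have hl0 : 0 ≤ l := le_min (by positivity) (by positivity)
  have hlB : l * B ≤ 1 := by
    have h := min_le_right (t / (2 * σ ^ 2)) (1 / B)
    rw [← hldef] at h
    calc l * B ≤ (1 / B) * B := mul_le_mul_of_nonneg_right h hB0.le
      _ = 1 := by field_simp
  have hlσ : l * σ ^ 2 ≤ t / 2 := by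
    have h := min_le_left (t / (2 * σ ^ 2)) (1 / B)
    rw [← hldef] at h
    have h2 := (le_div_iff₀ (by positivity : (0:ℝ) < 2 * σ ^ 2)).1 h
    linarith
  have hr0 : (0:ℝ) ≤ (n : ℝ) ^ (-(γ * κ)) := Real.rpow_nonneg hn0.le _
  have hκL : (0:ℝ) ≤ κ * L := by positivity
  -- the key exponential bound
  have key : Real.exp (-l * ((n:ℝ) * t)) * Real.exp ((n:ℝ) * (l ^ 2 * σ ^ 2))
      ≤ (n : ℝ) ^ (-(γ * κ)) := by
    rw [← Real.exp_add, Real.rpow_def_of_pos hn0, ← hLdef]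
    apply Real.exp_le_exp.2
    have hq : (n:ℝ) * (l ^ 2 * σ ^ 2) ≤ l * ((n:ℝ) * t) / 2 := by
      have e : (n:ℝ) * (l ^ 2 * σ ^ 2) = (n:ℝ) * l * (l * σ ^ 2) := by ring
      have e2 : l * ((n:ℝ) * t) / 2 = (n:ℝ) * l * (t / 2) := by ring
      rw [e, e2]
      exact mul_le_mul_of_nonneg_left hlσ (by positivity)
    have hmain : γ * κ * L ≤ l * ((n:ℝ) * t) / 2 := by
      rcases min_cases (t / (2 * σ ^ 2)) (1 / B) with ⟨hmin, _⟩ | ⟨hmin, _⟩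
      · rw [← hldef] at hmin
        rw [hmin]
        have ht2 : t ^ 2 = κ ^ 2 / 4 * (L / n) := by
          rw [htdef, mul_pow, Real.sq_sqrt (by positivity : (0:ℝ) ≤ L / n)]
          ring
        have e3 : t / (2 * σ ^ 2) * ((n:ℝ) * t) / 2 = (n:ℝ) * t ^ 2 / (4 * σ ^ 2) := by
          field_simp
          ring
        rw [e3, ht2]
        have e4 : (n:ℝ) * (κ ^ 2 / 4 * (L / n)) / (4 * σ ^ 2) = κ ^ 2 * L / (16 * σ ^ 2) := by
          field_simp
          ring
        rw [e4, le_div_iff₀ (by positivity : (0:ℝ) < 16 * σ ^ 2)]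
        exact num_case1 hγle hκ hκ0 hL
      · rw [← hldef] at hmin
        rw [hmin]
        set s : ℝ := Real.sqrt (L / n) with hsdef
        have hspos : 0 < s := Real.sqrt_pos.2 (by positivity)
        set s' : ℝ := Real.sqrt ((n:ℝ) / L) with hs'def
        have hs'pos : 0 < s' := Real.sqrt_pos.2 (by positivity)
        have hss' : s * s' = 1 := by
          rw [hsdef, hs'def, ← Real.sqrt_mul (by positivity : (0:ℝ) ≤ L / n),
            show L / n * ((n:ℝ) / L) = 1 by field_simp]
          exact Real.sqrt_one
        have hns2 : (n:ℝ) * s ^ 2 = L := by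
          rw [hsdef, Real.sq_sqrt (by positivity : (0:ℝ) ≤ L / n)]
          field_simp
        have hpow : (2:ℝ) ^ ((j * d : ℝ) / 2) ≤ s' := by
          have h1 : (2:ℝ) ^ ((j * d : ℝ) / 2) = Real.sqrt ((2:ℝ) ^ ((j : ℝ) * d)) := by
            rw [Real.sqrt_eq_rpow, ← Real.rpow_mul (by norm_num : (0:ℝ) ≤ 2)]
            ring_nf
          rw [h1, hs'def]
          apply Real.sqrt_le_sqrt
          rw [show ((j:ℝ) * d) = ((j * d : ℕ) : ℝ) by push_cast; ring, Real.rpow_natCast]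
          exact hjd
        have hBle : B ≤ 2 * c * s' := by
          rw [hBdef, hMdef]
          have h7 := mul_le_mul_of_nonneg_left hpow hc.le
          linarith only [h7]
        have e5 : 1 / B * ((n:ℝ) * t) / 2 = (n:ℝ) * t / (2 * B) := by
          field_simp
        rw [e5, le_div_iff₀ (by positivity : (0:ℝ) < 2 * B)]
        have h6 : γ * κ * L * (2 * B) * s ≤ (n:ℝ) * t * s := by
          calc γ * κ * L * (2 * B) * s = (γ * κ * L * 2 * s) * B := by ring
            _ ≤ (γ * κ * L * 2 * s) * (2 * c * s') :=
                mul_le_mul_of_nonneg_left hBle (by positivity)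
            _ = γ * κ * L * (2 * (2 * c * s')) * s := by ring
            _ = 4 * c * (γ * (κ * L)) * (s * s') := by ring
            _ = 4 * c * (γ * (κ * L)) := by rw [hss', mul_one]
            _ ≤ 4 * c * ((1 / (8 * c)) * (κ * L)) :=
                mul_le_mul_of_nonneg_left (mul_le_mul_of_nonneg_right hγc hκL) (by positivity)
            _ = κ * L / 2 := by field_simp; ring
            _ = (n:ℝ) * t * s := by
                rw [htdef, show (n:ℝ) * (κ / 2 * s) * s = κ * ((n:ℝ) * s ^ 2) / 2 by ring, hns2]
        exact le_of_mul_le_mul_right h6 hspos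
    linarith only [hmain, hq]
  -- Chernoff bounds for the two tails
  have hone1 := oneSided X hXm hind ⟨0, hn⟩ hid (fun x => ψ x - β)
    (hψm.sub measurable_const) B (σ ^ 2) l ((n:ℝ) * t) hb1 hmean1 hvar1 hl0 hlB
  have hone2 := oneSided X hXm hind ⟨0, hn⟩ hid (fun x => β - ψ x)
    (measurable_const.sub hψm) B (σ ^ 2) l ((n:ℝ) * t) hb2 hmean2 hvar2 hl0 hlB
  have hA1 : P {ω | (n:ℝ) * t ≤ ∑ i, (ψ (X i ω) - β)}
      ≤ ENNReal.ofReal ((n : ℝ) ^ (-(γ * κ))) :=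
    (ENNReal.le_ofReal_iff_toReal_le (measure_ne_top _ _) hr0).2 (hone1.trans key)
  have hA2 : P {ω | (n:ℝ) * t ≤ ∑ i, (β - ψ (X i ω))}
      ≤ ENNReal.ofReal ((n : ℝ) ^ (-(γ * κ))) :=
    (ENNReal.le_ofReal_iff_toReal_le (measure_ne_top _ _) hr0).2 (hone2.trans key)
  have hsub : {ω | t ≤ |(n : ℝ)⁻¹ * ∑ i, ψ (X i ω) - β|}
      ⊆ {ω | (n:ℝ) * t ≤ ∑ i, (ψ (X i ω) - β)} ∪ {ω | (n:ℝ) * t ≤ ∑ i, (β - ψ (X i ω))} := by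
    intro ω hω
    simp only [Set.mem_setOf_eq] at hω
    have hsum1 : ∑ i, (ψ (X i ω) - β) = (∑ i, ψ (X i ω)) - (n:ℝ) * β := by
      rw [Finset.sum_sub_distrib, Finset.sum_const, Finset.card_univ, Fintype.card_fin,
        nsmul_eq_mul]
    have hsum2 : ∑ i, (β - ψ (X i ω)) = (n:ℝ) * β - ∑ i, ψ (X i ω) := by
      rw [Finset.sum_sub_distrib, Finset.sum_const, Finset.card_univ, Fintype.card_fin,
        nsmul_eq_mul]
    have hinv : (n:ℝ) * ((n:ℝ)⁻¹ * ∑ i, ψ (X i ω)) = ∑ i, ψ (X i ω) := by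
      field_simp
    rcases le_abs.1 hω with h | h
    · left
      simp only [Set.mem_setOf_eq]
      rw [hsum1]
      have h2 := mul_le_mul_of_nonneg_left h hn0.le
      rw [mul_sub, hinv] at h2
      linarith only [h2]
    · right
      simp only [Set.mem_setOf_eq]
      rw [hsum2]
      have h2 := mul_le_mul_of_nonneg_left h hn0.le
      rw [mul_neg, mul_sub, hinv] at h2
      linarith only [h2]
  calc P {ω | t ≤ |(n : ℝ)⁻¹ * ∑ i, ψ (X i ω) - β|}
      ≤ P ({ω | (n:ℝ) * t ≤ ∑ i, (ψ (X i ω) - β)}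
          ∪ {ω | (n:ℝ) * t ≤ ∑ i, (β - ψ (X i ω))}) := measure_mono hsub
    _ ≤ P {ω | (n:ℝ) * t ≤ ∑ i, (ψ (X i ω) - β)}
        + P {ω | (n:ℝ) * t ≤ ∑ i, (β - ψ (X i ω))} := measure_union_le _ _
    _ ≤ ENNReal.ofReal ((n : ℝ) ^ (-(γ * κ))) + ENNReal.ofReal ((n : ℝ) ^ (-(γ * κ))) :=
        add_le_add hA1 hA2
    _ = ENNReal.ofReal (2 * (n : ℝ) ^ (-(γ * κ))) := by
        rw [← ENNReal.ofReal_add hr0 hr0]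
        ring_nf
end
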